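/- arXiv:1907.07960 — 3 statements merged into one kernel-verified Lean document; each statement's English description precedes it below -/
import Mathlib

section
/- Let Λ = A·ℤ^n and let B be an invertible m×m submatrix of A with Γ = B·ℤ^m. Then Γ ⊆ Λ, and the quotient group Λ/Γ has cardinality |det(B)| / det(Λ), where det(Λ) is the gcd γ of the absolute values of the m×m minors of A. -/
private lemma range_submatrix_le (m n : ℕ) (A : Matrix (Fin m) (Fin n) ℤ)
    (g : Fin m → Fin n) :
    LinearMap.range (A.submatrix id g).mulVecLin ≤ LinearMap.range A.mulVecLin := by
  have h : A.submatrix id g = A * (1 : Matrix (Fin n) (Fin n) ℤ).submatrix id g := by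
    ext i j
    simp [Matrix.mul_apply, Matrix.one_apply]
  rw [h, Matrix.mulVecLin_mul]
  exact LinearMap.range_comp_le_range _ _

private lemma card_quot_range_eq_natAbs_det (m : ℕ) (M : Matrix (Fin m) (Fin m) ℤ)
    (hM : M.det ≠ 0) :
    Nat.card ((Fin m → ℤ) ⧸ LinearMap.range M.mulVecLin) = M.det.natAbs := by
  classical
  have hinj : Function.Injective M.mulVecLin := by
    rw [← LinearMap.ker_eq_bot, Matrix.ker_mulVecLin_eq_bot_iff]
    intro v hv
    by_contra hne
    exact hM (Matrix.exists_mulVec_eq_zero_iff.mp ⟨v, hne, hv⟩)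
  set N := LinearMap.range M.mulVecLin with hN
  obtain ⟨r, snf⟩ := Submodule.smithNormalForm (Pi.basisFun ℤ (Fin m)) N
  let e1 : ((Fin m → ℤ)) ≃ₗ[ℤ] N := LinearEquiv.ofInjective M.mulVecLin hinj
  have hr : r = m := by
    have h1 : Module.finrank ℤ N = r := by
      rw [Module.finrank_eq_card_basis snf.bN, Fintype.card_fin]
    have h2 : Module.finrank ℤ N = m := by
      rw [← e1.finrank_eq, Module.finrank_fin_fun]
    omega
  subst hr
  -- index side
  have hidx : Nat.card ((Fin r → ℤ) ⧸ N) = ∏ i, (snf.a i).natAbs := by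
    rw [← Submodule.cardQuot_apply, Submodule.cardQuot,
      snf.toAddSubgroup_index_eq_pow_mul_prod]
    simp [Ideal.span_singleton_toAddSubgroup_eq_zmultiples, Int.index_zmultiples]
  -- determinant side
  have hbij : Function.Bijective snf.f := Finite.injective_iff_bijective.mp snf.f.injective
  let e : Fin r ≃ Fin r := Equiv.ofBijective snf.f hbij
  let E2 : (Fin r → ℤ) ≃ₗ[ℤ] N := snf.bM.equiv snf.bN e.symm
  let u : (Fin r → ℤ) ≃ₗ[ℤ] (Fin r → ℤ) := e1 ≪≫ₗ E2.symm
  have hfac : M.mulVecLin = (N.subtype ∘ₗ E2.toLinearMap) ∘ₗ u.toLinearMap := by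
    apply LinearMap.ext
    intro x
    simp only [LinearMap.comp_apply, LinearEquiv.coe_coe, LinearEquiv.trans_apply, u,
      LinearEquiv.apply_symm_apply, Submodule.subtype_apply]
    exact (LinearEquiv.ofInjective_apply M.mulVecLin (h := hinj) x).symm
  have hmat : LinearMap.toMatrix snf.bM snf.bM (N.subtype ∘ₗ E2.toLinearMap)
      = Matrix.diagonal (fun i => snf.a (e.symm i)) := by
    ext i j
    rw [LinearMap.toMatrix_apply]
    simp only [LinearMap.comp_apply, LinearEquiv.coe_coe, Module.Basis.equiv_apply,
      Submodule.subtype_apply, E2]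
    rw [snf.snf]
    have hfe : (snf.f (e.symm j)) = j := e.apply_symm_apply j
    rw [show snf.f (e.symm j) = j from hfe, map_smul, Module.Basis.repr_self]
    simp only [Finsupp.smul_single, smul_eq_mul, mul_one, Finsupp.single_apply,
      Matrix.diagonal_apply]
    by_cases h : i = j
    · subst h; simp
    · simp [h, Ne.symm h]
  have hdet1 : LinearMap.det (N.subtype ∘ₗ E2.toLinearMap) = ∏ i, snf.a (e.symm i) := by
    rw [← LinearMap.det_toMatrix snf.bM, hmat, Matrix.det_diagonal]
  have hdetM : M.det = LinearMap.det M.mulVecLin := by rw [← LinearMap.det_toLin']; rfl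
  have hun : IsUnit (LinearMap.det u.toLinearMap) := u.isUnit_det'
  have hd : M.det.natAbs = ∏ i, (snf.a i).natAbs := by
    rw [hdetM, hfac, LinearMap.det_comp, hdet1]
    rw [Int.natAbs_mul]
    rw [Int.isUnit_iff] at hun
    have h3 : (LinearMap.det u.toLinearMap).natAbs = 1 := by
      rcases hun with h | h <;> simp [h]
    rw [h3, mul_one,
      Fintype.prod_equiv e.symm (fun i => snf.a (e.symm i)) snf.a (fun i => rfl)]
    exact map_prod Int.natAbsHom snf.a Finset.univ
  rw [hidx, hd]

private lemma det_mul_expand (m n : ℕ) (A : Matrix (Fin m) (Fin n) ℤ)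
    (S : Matrix (Fin n) (Fin m) ℤ) :
    (A * S).det = ∑ r : Fin m → Fin n, (∏ i, S (r i) i) * (A.submatrix id r).det := by
  rw [← Matrix.det_transpose, Matrix.transpose_mul]
  have h : S.transpose * A.transpose = Matrix.of fun i => ∑ k, S k i • A.transpose k := by
    ext i j
    simp [Matrix.mul_apply, Finset.sum_apply]
  rw [h]
  have h1 : (Matrix.of fun i => ∑ k, S k i • A.transpose k).det
      = (Matrix.detRowAlternating (R := ℤ) (n := Fin m)).toMultilinearMap
          (fun i => ∑ k, S k i • A.transpose k) := rfl
  rw [h1, (Matrix.detRowAlternating (R := ℤ) (n := Fin m)).toMultilinearMap.map_sum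
    (α := fun _ : Fin m => Fin n) (g := fun i k => S k i • A.transpose k)]
  refine Finset.sum_congr rfl fun r _ => ?_
  rw [(Matrix.detRowAlternating (R := ℤ) (n := Fin m)).toMultilinearMap.map_smul_univ]
  have h2 : (Matrix.detRowAlternating (R := ℤ) (n := Fin m)).toMultilinearMap
      (fun i => A.transpose (r i)) = ((A.submatrix id r).transpose).det := rfl
  rw [h2, Matrix.det_transpose]
  simp [smul_eq_mul]

/-- Let `Λ = A·ℤⁿ` and let `B = A_g` be an invertible `m × m` submatrix of `A`
(columns of `A` selected by the injection `g`), with `Γ = B·ℤᵐ`.  Then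
`Γ ⊆ Λ` and the quotient `Λ/Γ` has cardinality `|det B| / γ`, where
`γ = det Λ` is the gcd of the absolute values of the `m × m` minors of `A`. -/
theorem stmt2 (m n : ℕ) (A : Matrix (Fin m) (Fin n) ℤ) (hA : A.rank = m)
    (g : Fin m → Fin n) (hg : Function.Injective g)
    (hB : (A.submatrix id g).det ≠ 0) :
    LinearMap.range (A.submatrix id g).mulVecLin ≤ LinearMap.range A.mulVecLin ∧
    Nat.card
        ((LinearMap.range A.mulVecLin) ⧸
          ((LinearMap.range (A.submatrix id g).mulVecLin).comap
            (LinearMap.range A.mulVecLin).subtype)) *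
      Finset.univ.gcd (fun g' : Fin m → Fin n => (A.submatrix id g').det.natAbs)
      = (A.submatrix id g).det.natAbs := by
  classical
  refine ⟨range_submatrix_le m n A g, ?_⟩
  set Λ := LinearMap.range A.mulVecLin with hΛdef
  set Γ := LinearMap.range (A.submatrix id g).mulVecLin with hΓdef
  have hΓΛ : Γ ≤ Λ := range_submatrix_le m n A g
  set γ := Finset.univ.gcd (fun g' : Fin m → Fin n => (A.submatrix id g').det.natAbs) with hγ
  -- basis of Λ
  obtain ⟨r, bΛ⟩ := Submodule.basisOfPid (Pi.basisFun ℤ (Fin m)) Λ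
  have hrm : r = m := by
    have hBinj : Function.Injective (A.submatrix id g).mulVecLin := by
      rw [← LinearMap.ker_eq_bot, Matrix.ker_mulVecLin_eq_bot_iff]
      intro v hv
      by_contra hne
      exact hB (Matrix.exists_mulVec_eq_zero_iff.mp ⟨v, hne, hv⟩)
    have e1 : (Fin m → ℤ) ≃ₗ[ℤ] Γ := LinearEquiv.ofInjective _ hBinj
    have h1 : Module.finrank ℤ Λ = r := by
      rw [Module.finrank_eq_card_basis bΛ, Fintype.card_fin]
    have h2 : m ≤ Module.finrank ℤ Λ := by
      calc m = Module.finrank ℤ Γ := by rw [← e1.finrank_eq, Module.finrank_fin_fun]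
        _ ≤ Module.finrank ℤ Λ := Submodule.finrank_mono hΓΛ
    have h3 : Module.finrank ℤ Λ ≤ m := by
      have := Submodule.finrank_le Λ
      rwa [Module.finrank_fin_fun] at this
    omega
  subst hrm
  -- the matrix of the basis of Λ
  set C : Matrix (Fin r) (Fin r) ℤ := Matrix.of (fun i j => (bΛ j : Fin r → ℤ) i) with hC
  have hCmulVec : ∀ v : Fin r → ℤ, C.mulVec v = ∑ j, v j • (bΛ j : Fin r → ℤ) := by
    intro v
    ext i
    simp only [Matrix.mulVec, dotProduct, Finset.sum_apply, Pi.smul_apply, smul_eq_mul,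
      hC, Matrix.of_apply]
    exact Finset.sum_congr rfl fun j _ => mul_comm _ _
  have hCrange : LinearMap.range C.mulVecLin = Λ := by
    apply le_antisymm
    · rintro x ⟨v, rfl⟩
      rw [Matrix.mulVecLin_apply, hCmulVec]
      exact Submodule.sum_mem _ fun j _ =>
        Submodule.smul_mem _ _ (SetLike.coe_mem (bΛ j))
    · intro x hx
      have hrepr : x = ∑ j, (bΛ.repr ⟨x, hx⟩) j • (bΛ j : Fin r → ℤ) := by
        have := bΛ.sum_repr ⟨x, hx⟩
        calc x = ((⟨x, hx⟩ : Λ) : Fin r → ℤ) := rfl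
          _ = ((∑ j, (bΛ.repr ⟨x, hx⟩) j • bΛ j : Λ) : Fin r → ℤ) := by rw [this]
          _ = ∑ j, (bΛ.repr ⟨x, hx⟩) j • (bΛ j : Fin r → ℤ) := by
              push_cast; rfl
      exact ⟨fun j => (bΛ.repr ⟨x, hx⟩) j, by rw [Matrix.mulVecLin_apply, hCmulVec, ← hrepr]⟩
  have hCdet : C.det ≠ 0 := by
    intro h0
    obtain ⟨v, hv, hvz⟩ := Matrix.exists_mulVec_eq_zero_iff.mpr h0
    rw [hCmulVec] at hvz
    have : ∑ j, v j • bΛ j = 0 := by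
      apply Subtype.ext
      push_cast
      convert hvz using 2
    have hvzero := linearIndependent_iff'.mp bΛ.linearIndependent Finset.univ v this
    exact hv (funext fun j => hvzero j (Finset.mem_univ j))
  -- cardinalities
  have cardΓ : Nat.card ((Fin r → ℤ) ⧸ Γ) = (A.submatrix id g).det.natAbs :=
    card_quot_range_eq_natAbs_det r _ hB
  have cardΛ : Nat.card ((Fin r → ℤ) ⧸ Λ) = C.det.natAbs := by
    rw [← hCrange]
    exact card_quot_range_eq_natAbs_det r _ hCdet
  -- index Λ divides γ
  have hdvd1 : Nat.card ((Fin r → ℤ) ⧸ Λ) ∣ γ := by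
    refine Finset.dvd_gcd fun g' _ => ?_
    by_cases hzero : (A.submatrix id g').det = 0
    · rw [hzero]; exact dvd_zero _
    · have hle : LinearMap.range (A.submatrix id g').mulVecLin ≤ Λ :=
        range_submatrix_le r n A g'
      have key := Submodule.card_quotient_mul_card_quotient Λ
        (LinearMap.range (A.submatrix id g').mulVecLin) hle
      rw [card_quot_range_eq_natAbs_det r _ hzero] at key
      exact Dvd.intro_left _ key
  -- γ divides index Λ
  have hdvd2 : γ ∣ Nat.card ((Fin r → ℤ) ⧸ Λ) := by
    rw [cardΛ]
    -- write C = A * S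
    have hcol : ∀ j, ∃ s : Fin n → ℤ, A.mulVec s = (bΛ j : Fin r → ℤ) := by
      intro j
      have hmem : (bΛ j : Fin r → ℤ) ∈ LinearMap.range A.mulVecLin :=
        SetLike.coe_mem (bΛ j)
      exact hmem
    choose s hs using hcol
    have hCS : C = A * Matrix.of (fun i j => s j i) := by
      ext i j
      rw [Matrix.mul_apply]
      have := congrFun (hs j) i
      simp only [Matrix.mulVec, dotProduct] at this
      simpa [hC] using this.symm
    rw [hCS, det_mul_expand]
    have hterm : ∀ r' : Fin r → Fin n, (γ : ℤ) ∣
        (∏ i, (Matrix.of (fun i j => s j i)) (r' i) i) * (A.submatrix id r').det := by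
      intro r'
      apply Dvd.dvd.mul_left
      rw [← Int.dvd_natAbs]
      exact_mod_cast Finset.gcd_dvd (Finset.mem_univ r')
    have : (γ : ℤ) ∣ ∑ r' : Fin r → Fin n,
        (∏ i, (Matrix.of (fun i j => s j i)) (r' i) i) * (A.submatrix id r').det :=
      Finset.dvd_sum fun r' _ => hterm r'
    have h4 := Int.natAbs_dvd_natAbs.mpr this
    rwa [Int.natAbs_natCast] at h4
  have hγcard : γ = Nat.card ((Fin r → ℤ) ⧸ Λ) := Nat.dvd_antisymm hdvd2 hdvd1
  -- relate the quotient in the statement to Λ.map Γ.mkQ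
  have hquot : Nat.card (Λ ⧸ Γ.comap Λ.subtype) = Nat.card (Λ.map Γ.mkQ) := by
    have hker : LinearMap.ker (Γ.mkQ ∘ₗ Λ.subtype) = Γ.comap Λ.subtype := by
      rw [LinearMap.ker_comp, Submodule.ker_mkQ]
    have hrange : LinearMap.range (Γ.mkQ ∘ₗ Λ.subtype) = Λ.map Γ.mkQ := by
      rw [LinearMap.range_comp, Submodule.range_subtype]
    refine Nat.card_congr ?_
    exact ((Submodule.quotEquivOfEq _ _ hker.symm).trans
      ((LinearMap.quotKerEquivRange (Γ.mkQ ∘ₗ Λ.subtype)).trans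
        (LinearEquiv.ofEq _ _ hrange))).toEquiv
  have key := Submodule.card_quotient_mul_card_quotient Λ Γ hΓΛ
  rw [hquot, hγcard, ← cardΓ]
  exact key
end

section
/- Let A ∈ ℤ^{m×n} have rank m, let B ⊆ A be an invertible m×m submatrix, let Γ = B·ℤ^m, and let γ be the gcd of the absolute values of the m×m minors of A. If z ∈ ℤ^n_{≥0} is such that no w ∈ ℤ^n with 0 ≤ w ⪇ z satisfies A w ≡ A z (mod Γ), then ‖z‖₁ < γ⁻¹·|det(B)|. -/
/-!
Inside `ℤᵐ` we have `Γ = B ℤᵐ ≤ Λ = A ℤⁿ`, so `|det B| = [ℤᵐ : Γ] = [Λ : Γ] · [ℤᵐ : Λ]`.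
A basis of `Λ` is `A C` for an integer `n × m` matrix `C`, and by the Cauchy–Binet expansion
`det (A C)` is an integer combination of the `m × m` minors of `A`; hence `γ ∣ [ℤᵐ : Λ]`.
A saturated chain `0 = y⁰ < y¹ < ⋯ < yˢ = z` with `s = ‖z‖₁` gives `s + 1` pairwise
inequivalent classes `A yᵏ` in `Λ / Γ`: if `A yᵏ ≡ A yˡ` with `k < l`, then
`w = z - yˡ + yᵏ` satisfies `0 ≤ w ⪇ z` and `A w ≡ A z`. Thus `(s + 1) γ ≤ |det B|`.
-/

open Matrix Finset

theorem exists_strictMono_chain {ι : Type*} [Fintype ι] (z : ι → ℤ) (hz : 0 ≤ z) :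
    ∃ y : Fin ((∑ i, z i).toNat + 1) → ι → ℤ, StrictMono y ∧ y 0 = 0 ∧ y (Fin.last _) = z := by
  classical
  obtain ⟨s, hs⟩ : ∃ s : Multiset ι, ∀ i, (s.count i : ℤ) = z i :=
    ⟨Multiset.toFinsupp.symm (Finsupp.equivFunOnFinite.symm fun i => (z i).toNat),
      fun i => by simpa using hz i⟩
  -- `yᵏ` counts the letters among the first `k` of a word in which `i` occurs `z i` times.
  set L := s.toList
  have hcount : ∀ i, L.count i = s.count i := fun i => by
    rw [← Multiset.coe_count, Multiset.coe_toList]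
  have hsum : ∀ k, ∑ i, ((L.take k).count i : ℤ) = min k L.length := fun k => by
    have := Multiset.sum_count_eq_card (s := univ) (m := (L.take k : Multiset ι)) (by simp)
    simp only [Multiset.coe_count, Multiset.coe_card, List.length_take] at this
    exact_mod_cast this
  have hlen : (L.length : ℤ) = ∑ i, z i := by
    simpa [← hcount, ← hs] using (hsum L.length).symm
  refine ⟨fun k i => ((L.take k).count i : ℤ), ?_, by ext; simp, ?_⟩
  · refine Monotone.strictMono_of_injective
      (fun k l hkl i => Nat.cast_le.2 ((List.take_sublist_take_left hkl).count_le i)) ?_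
    intro k l hkl
    have := congrArg (fun y : ι → ℤ => ∑ i, y i) hkl
    simp only [hsum] at this
    omega
  · ext i
    simp [← hlen, hcount, hs]

theorem Submodule.card_le_card_map_mkQ {R M ι : Type*} [Ring R] [AddCommGroup M] [Module R M]
    {Γ Λ : Submodule R M} [Finite (M ⧸ Γ)] (f : ι → M) (hfΛ : ∀ i, f i ∈ Λ)
    (hf : Pairwise fun i j => f i - f j ∉ Γ) : Nat.card ι ≤ Nat.card (Λ.map Γ.mkQ) := by
  refine Nat.card_le_card_of_injective (fun i => ⟨Γ.mkQ (f i), mem_map_of_mem (hfΛ i)⟩) ?_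
  intro i j hij
  by_contra hne
  exact hf hne ((Quotient.eq Γ).1 (congrArg Subtype.val hij))

section Minimal

variable {R : Type*} [CommRing R] [PartialOrder R] [IsOrderedAddMonoid R] {m n : Type*}
  [Fintype n] {A : Matrix m n R} {Γ : Submodule R (m → R)} {z : n → R}

theorem Matrix.mulVec_sub_mulVec_notMem_of_lt
    (hmin : ∀ w, 0 ≤ w → w ≤ z → w ≠ z → A *ᵥ w - A *ᵥ z ∉ Γ) {u v : n → R}
    (hu : 0 ≤ u) (huv : u < v) (hvz : v ≤ z) : A *ᵥ u - A *ᵥ v ∉ Γ := by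
  have hw := hmin (u + (z - v)) (add_nonneg hu (sub_nonneg.2 hvz))
    (by simpa using add_le_add_left huv.le (z - v))
    (fun h => huv.ne (by simpa using congrArg (· - (z - v)) h))
  rwa [mulVec_add, mulVec_sub, add_sub_assoc, sub_sub_cancel_left, ← sub_eq_add_neg] at hw

theorem Matrix.pairwise_mulVec_sub_notMem_of_strictMono
    (hmin : ∀ w, 0 ≤ w → w ≤ z → w ≠ z → A *ᵥ w - A *ᵥ z ∉ Γ) {ι : Type*} [LinearOrder ι]
    {y : ι → n → R} (hy : StrictMono y) (hy0 : ∀ k, 0 ≤ y k) (hyz : ∀ k, y k ≤ z) :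
    Pairwise fun k l => A *ᵥ y k - A *ᵥ y l ∉ Γ := by
  intro k l hkl
  rcases hkl.lt_or_gt with hlt | hgt
  · exact mulVec_sub_mulVec_notMem_of_lt hmin (hy0 k) (hy hlt) (hyz l)
  · rw [← Submodule.neg_mem_iff, neg_sub]
    exact mulVec_sub_mulVec_notMem_of_lt hmin (hy0 l) (hy hgt) (hyz k)

end Minimal

theorem Matrix.det_mul_eq_sum_det_submatrix {R : Type*} [CommRing R] {m n : Type*} [Fintype m]
    [DecidableEq m] [Fintype n] (A : Matrix m n R) (C : Matrix n m R) :
    (A * C).det = ∑ p : m → n, (∏ i, C (p i) i) * (A.submatrix id p).det := by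
  simp only [det_apply', mul_apply, prod_univ_sum, Fintype.piFinset_univ, mul_sum, submatrix_apply,
    id_eq]
  rw [sum_comm]
  refine sum_congr rfl fun p _ => sum_congr rfl fun σ _ => ?_
  rw [prod_mul_distrib]
  ring

theorem Matrix.dvd_det_mul_of_dvd_det_submatrix {R : Type*} [CommRing R] {m n : Type*} [Fintype m]
    [DecidableEq m] [Fintype n] {d : R} (A : Matrix m n R) (C : Matrix n m R)
    (hd : ∀ p : m → n, d ∣ (A.submatrix id p).det) : d ∣ (A * C).det := by
  rw [det_mul_eq_sum_det_submatrix]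
  exact dvd_sum fun p _ => (hd p).mul_left _

theorem Matrix.range_mulVecLin_submatrix_le {R : Type*} [CommRing R] {m n o : Type*} [Fintype n]
    [Fintype o] [DecidableEq n] (A : Matrix m n R) (g : o → n) :
    LinearMap.range (A.submatrix id g).mulVecLin ≤ LinearMap.range A.mulVecLin := by
  have : A.submatrix id g = A * (1 : Matrix n n R).submatrix id g := by
    simpa using (mul_submatrix_one (Equiv.refl n) g A).symm
  rw [this, mulVecLin_mul]
  exact LinearMap.range_comp_le_range _ _

theorem Matrix.card_quotient_range_mulVecLin {ι : Type*} [Fintype ι] [DecidableEq ι]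
    (C : Matrix ι ι ℤ) (hC : Function.Injective C.mulVecLin) :
    Nat.card ((ι → ℤ) ⧸ LinearMap.range C.mulVecLin) = C.det.natAbs := by
  rw [← Submodule.natAbs_det_equiv _ (LinearEquiv.ofInjective _ hC), ← LinearMap.det_toLin',
    toLin'_apply']
  rfl

theorem Matrix.exists_range_mulVecLin_mul_eq {m : ℕ} {ι : Type*} [Fintype ι] [DecidableEq ι]
    (A : Matrix (Fin m) ι ℤ) (hA : A.rank = m) :
    ∃ C : Matrix ι (Fin m) ℤ, Function.Injective (A * C).mulVecLin ∧
      LinearMap.range (A * C).mulVecLin = LinearMap.range A.mulVecLin := by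
  let e : (Fin m → ℤ) ≃ₗ[ℤ] LinearMap.range A.mulVecLin :=
    (Module.finBasisOfFinrankEq ℤ _ hA).equivFun.symm
  obtain ⟨φ, hφ⟩ := Module.projective_lifting_property A.mulVecLin.rangeRestrict
    (e : (Fin m → ℤ) →ₗ[ℤ] _) A.mulVecLin.surjective_rangeRestrict
  have hAC : (A * φ.toMatrix').mulVecLin = (LinearMap.range A.mulVecLin).subtype ∘ₗ e := by
    rw [mulVecLin_mul, ← toLin'_apply' φ.toMatrix', toLin'_toMatrix', ← hφ]
    rfl
  refine ⟨φ.toMatrix', ?_, ?_⟩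
  · rw [hAC]
    exact Subtype.val_injective.comp e.injective
  · rw [hAC, LinearMap.range_comp, LinearEquiv.range, Submodule.map_top, Submodule.range_subtype]

theorem Matrix.dvd_card_quotient_range_mulVecLin {m : ℕ} {ι : Type*} [Fintype ι] [DecidableEq ι]
    (A : Matrix (Fin m) ι ℤ) (hA : A.rank = m) {d : ℤ}
    (hd : ∀ p : Fin m → ι, d ∣ (A.submatrix id p).det) :
    d ∣ Nat.card ((Fin m → ℤ) ⧸ LinearMap.range A.mulVecLin) := by
  obtain ⟨C, hC, hrange⟩ := A.exists_range_mulVecLin_mul_eq hA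
  rw [← hrange, card_quotient_range_mulVecLin _ hC]
  exact Int.dvd_natAbs.2 (dvd_det_mul_of_dvd_det_submatrix A C hd)

theorem stmt4_general (m n : ℕ) (A : Matrix (Fin m) (Fin n) ℤ) (hA : A.rank = m)
    (g : Fin m → Fin n)
    (hB : (A.submatrix id g).det ≠ 0)
    (z : Fin n → ℤ) (hz : 0 ≤ z)
    (hmin : ∀ w : Fin n → ℤ, 0 ≤ w → w ≤ z → w ≠ z →
      A.mulVec w - A.mulVec z ∉ LinearMap.range (A.submatrix id g).mulVecLin) :
    (∑ i, z i) *
        (Finset.univ.gcd (fun g' : Fin m → Fin n =>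
          (A.submatrix id g').det.natAbs) : ℤ) <
      ((A.submatrix id g).det.natAbs : ℤ) := by
  set γ : ℤ := univ.gcd fun g' : Fin m → Fin n => ((A.submatrix id g').det.natAbs : ℤ)
  set Γ := LinearMap.range (A.submatrix id g).mulVecLin
  set Λ := LinearMap.range A.mulVecLin
  have hΓ : Nat.card ((Fin m → ℤ) ⧸ Γ) = (A.submatrix id g).det.natAbs :=
    card_quotient_range_mulVecLin _
      (mulVec_injective_of_det_mem_nonZeroDivisors (mem_nonZeroDivisors_of_ne_zero hB))
  have : Finite ((Fin m → ℤ) ⧸ Γ) := Nat.finite_of_card_ne_zero (by simpa [hΓ] using hB)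
  have hindex := Submodule.card_quotient_mul_card_quotient Λ Γ (A.range_mulVecLin_submatrix_le g)
  obtain ⟨y, hy, hy0, hyz⟩ := exists_strictMono_chain z hz
  have hchain : (∑ i, z i).toNat + 1 ≤ Nat.card (Λ.map Γ.mkQ) := by
    simpa using Submodule.card_le_card_map_mkQ (fun k => A *ᵥ y k)
      (fun k => LinearMap.mem_range_self _ (y k))
      (pairwise_mulVec_sub_notMem_of_strictMono hmin hy
        (fun k => hy0 ▸ hy.monotone (Fin.zero_le k)) (fun k => hyz ▸ hy.monotone (Fin.le_last k)))
  have hγ : γ ∣ Nat.card ((Fin m → ℤ) ⧸ Λ) :=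
    A.dvd_card_quotient_range_mulVecLin hA fun p => Int.dvd_natAbs.1 (gcd_dvd (mem_univ p))
  have hγ0 : 0 < γ := Int.finsetGcd_nonneg.lt_of_ne' fun h =>
    hB (by simpa using (gcd_eq_zero_iff.1 h) g (mem_univ g))
  have hΛ0 : Nat.card ((Fin m → ℤ) ⧸ Λ) ≠ 0 := fun h => hB (by simpa [h, hΓ] using hindex.symm)
  have hsum : ((∑ i, z i).toNat : ℤ) = ∑ i, z i := Int.toNat_of_nonneg (sum_nonneg fun i _ => hz i)
  calc (∑ i, z i) * γ < (∑ i, z i + 1) * γ := by gcongr; exact lt_add_one _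
    _ ≤ Nat.card (Λ.map Γ.mkQ) * Nat.card ((Fin m → ℤ) ⧸ Λ) := by
        gcongr
        · rw [← hsum]; exact_mod_cast hchain
        · exact Int.le_of_dvd (by omega) hγ
    _ = (A.submatrix id g).det.natAbs := by exact_mod_cast hindex.trans hΓ

/-- If `z ∈ ℤⁿ_{≥0}` is such that no `w` with `0 ≤ w ⪇ z` satisfies
`A w ≡ A z (mod Γ)` where `Γ = B·ℤᵐ` for an invertible `m × m` submatrix
`B = A_g` of `A`, then `‖z‖₁ < γ⁻¹·|det B|`, i.e. `γ·‖z‖₁ < |det B|`,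
where `γ` is the gcd of the absolute values of the `m × m` minors of `A`. -/
theorem stmt4 (m n : ℕ) (A : Matrix (Fin m) (Fin n) ℤ) (hA : A.rank = m)
    (g : Fin m → Fin n) (hg : Function.Injective g)
    (hB : (A.submatrix id g).det ≠ 0)
    (z : Fin n → ℤ) (hz : 0 ≤ z)
    (hmin : ∀ w : Fin n → ℤ, 0 ≤ w → w ≤ z → w ≠ z →
      A.mulVec w - A.mulVec z ∉ LinearMap.range (A.submatrix id g).mulVecLin) :
    (∑ i, z i) *
        (Finset.univ.gcd (fun g' : Fin m → Fin n =>
          (A.submatrix id g').det.natAbs) : ℤ) <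
      ((A.submatrix id g).det.natAbs : ℤ) :=
  stmt4_general m n A hA g hB z hz hmin
end

section
/- Let A ∈ ℤ^{m×n} of rank m, B ⊆ A invertible with Γ = B·ℤ^m, γ the gcd of the m×m minors of A, and δ the maximum absolute value of an m×m minor of A. If z ∈ ℤ^n_{≥0} satisfies that no w with 0 ≤ w ⪇ z has A w ≡ A z (mod Γ), then ‖B⁻¹ A z‖_∞ ≤ ‖B⁻¹A‖_∞ · ‖z‖₁ < γ⁻¹ · δ. -/
/-!
Let `Γ = B ℤᵐ ⊆ L = A ℤⁿ`. The index `[ℤᵐ : L]` is `γ`: a matrix `D` whose columns form a basis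
of `L` factors as `D = A X`, so `γ ∣ det D` by the Cauchy–Binet expansion, while every nonsingular
maximal minor of `A` spans a sublattice of `L`. Hence `[L : Γ] = |det B| / γ`.
A maximal chain `0 = c₀ < c₁ < ⋯ < c_T = z` in the box `[0, z]` has `T = ‖z‖₁`, and the points
`A cₜ` are pairwise incongruent modulo `Γ`: if `A cₛ ≡ A cₜ` with `s < t`, then `z - cₜ + cₛ`
would be a smaller `w` with `A w ≡ A z`. So `‖z‖₁ + 1 ≤ |det B| / γ`.
By Cramer's rule the entries of `B⁻¹A` are quotients of maximal minors by `det B`, so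
`‖B⁻¹A‖_∞ ≤ δ / |det B|`, and the two bounds multiply to `‖B⁻¹A‖_∞ ‖z‖₁ < δ / γ`.
-/

open Module

theorem exists_strictMono_chain_s5 {ι : Type*} [Fintype ι] [DecidableEq ι] (T : ℕ) (z : ι → ℤ)
    (hz : 0 ≤ z) (hT : ∑ i, z i = T) :
    ∃ c : Fin (T + 1) → ι → ℤ, StrictMono c ∧ ∀ t, 0 ≤ c t ∧ c t ≤ z := by
  induction T generalizing z with
  | zero => exact ⟨fun _ => 0, fun a b h => by omega, fun _ => ⟨le_rfl, hz⟩⟩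
  | succ T ih =>
    obtain ⟨j, hj⟩ : ∃ j, 0 < z j := by
      by_contra! h
      have := Finset.sum_nonpos fun i (_ : i ∈ Finset.univ) => h i
      omega
    have hsingle : (0 : ι → ℤ) < Pi.single j 1 := Pi.single_pos.2 one_pos
    have hz_sub : 0 ≤ z - Pi.single j 1 := by
      intro i
      rcases eq_or_ne i j with rfl | hi
      · simp only [Pi.sub_apply, Pi.single_eq_same, Pi.zero_apply]; omega
      · simpa [hi] using hz i
    obtain ⟨c, hc, hcz⟩ := ih (z - Pi.single j 1) hz_sub (by
      simp [Finset.sum_sub_distrib, hT])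
    refine ⟨Fin.cons 0 fun t => c t + Pi.single j 1,
      Fin.strictMono_cons.2 ⟨fun t => add_pos_of_nonneg_of_pos (hcz t).1 hsingle, hc.add_const _⟩,
      Fin.cases ⟨le_rfl, hz⟩ fun t => ⟨add_nonneg (hcz t).1 hsingle.le, ?_⟩⟩
    simpa using add_le_add_left (hcz t).2 (Pi.single j 1)

theorem card_le_relIndex_of_minimal {ι M : Type*} [AddCommGroup M] (f : (ι → ℤ) →ₗ[ℤ] M)
    (Γ : Submodule ℤ M) (hΓ : Γ.toAddSubgroup.relIndex (LinearMap.range f).toAddSubgroup ≠ 0)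
    {z : ι → ℤ} (hmin : ∀ w, 0 ≤ w → w ≤ z → w ≠ z → f w - f z ∉ Γ)
    {k : ℕ} {c : Fin k → ι → ℤ} (hc : StrictMono c) (hcz : ∀ t, 0 ≤ c t ∧ c t ≤ z) :
    k ≤ Γ.toAddSubgroup.relIndex (LinearMap.range f).toAddSubgroup := by
  let L := (LinearMap.range f).toAddSubgroup
  have : Finite (L ⧸ Γ.toAddSubgroup.addSubgroupOf L) := Nat.finite_of_card_ne_zero hΓ
  let r (t : Fin k) : L ⧸ Γ.toAddSubgroup.addSubgroupOf L := (⟨f (c t), c t, rfl⟩ : L)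
  have hr : ∀ s t, s < t → r s ≠ r t := by
    intro s t hst hrst
    rw [QuotientAddGroup.eq, AddSubgroup.mem_addSubgroupOf] at hrst
    refine hmin (z - c t + c s) ?_ ?_ (fun h => (hc hst).ne ?_) ?_
    · exact add_nonneg (sub_nonneg.2 (hcz t).2) (hcz s).1
    · simpa using add_le_add_right (hc hst).le (z - c t)
    · exact add_left_cancel (h.trans (sub_add_cancel z (c t)).symm)
    · have hdiff : f (z - c t + c s) - f z = -(-f (c s) + f (c t)) := by
        simp only [map_add, map_sub]
        abel
      exact hdiff ▸ neg_mem hrst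
  have hinj : Function.Injective r := fun s t h => by
    by_contra hne
    rcases lt_or_gt_of_ne hne with hlt | hlt
    exacts [hr s t hlt h, hr t s hlt h.symm]
  exact (Nat.card_fin k).symm.trans_le (Nat.card_le_card_of_injective r hinj)

namespace Matrix

theorem exists_eq_mul_of_range_le {R μ ι κ : Type*} [CommRing R] [Fintype ι] [Fintype κ]
    [DecidableEq κ] {A : Matrix μ ι R} {D : Matrix μ κ R}
    (h : LinearMap.range D.mulVecLin ≤ LinearMap.range A.mulVecLin) :
    ∃ X : Matrix ι κ R, D = A * X := by
  choose x hx using fun j => h ⟨Pi.single j 1, rfl⟩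
  refine ⟨(of x)ᵀ, ?_⟩
  ext i j
  have := congrFun (hx j) i
  rw [mulVecLin_apply, mulVecLin_apply, mulVec_single_one] at this
  exact this.symm

theorem det_mul_eq_sum_mul_det_submatrix {R μ ι : Type*} [CommRing R] [Fintype μ]
    [DecidableEq μ] [Fintype ι] (A : Matrix μ ι R) (X : Matrix ι μ R) :
    (A * X).det = ∑ φ : μ → ι, (∏ j, X (φ j) j) * (A.submatrix id φ).det := by
  have hrows : (A * X)ᵀ = fun j => ∑ k, X k j • Aᵀ k := by
    ext j i
    simp [mul_apply, mul_comm]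
  rw [← det_transpose, hrows]
  change detRowAlternating.toMultilinearMap _ = _
  rw [MultilinearMap.map_sum]
  refine Finset.sum_congr rfl fun φ _ => ?_
  rw [MultilinearMap.map_smul_univ, smul_eq_mul, ← det_transpose (A.submatrix id φ)]
  rfl

theorem range_mulVecLin_submatrix_le_s5 {R μ ι κ : Type*} [CommRing R] [Fintype ι] [Fintype κ]
    [DecidableEq ι] (A : Matrix μ ι R) (φ : κ → ι) :
    LinearMap.range (A.submatrix id φ).mulVecLin ≤ LinearMap.range A.mulVecLin := by
  have : A.submatrix id φ = A * (1 : Matrix ι ι R).submatrix id φ := by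
    ext i j
    simp [mul_apply, one_apply]
  rw [this, mulVecLin_mul]
  exact LinearMap.range_comp_le_range _ _

theorem mulVecLin_injective_iff_det_ne_zero {R n : Type*} [CommRing R] [IsDomain R] [Fintype n]
    [DecidableEq n] (W : Matrix n n R) :
    Function.Injective W.mulVecLin ↔ W.det ≠ 0 := by
  rw [← LinearMap.ker_eq_bot, Submodule.eq_bot_iff, ne_eq, ← exists_mulVec_eq_zero_iff]
  simp only [LinearMap.mem_ker, mulVecLin_apply]
  grind

theorem index_range_mulVecLin {n : Type*} [Fintype n] [DecidableEq n] (W : Matrix n n ℤ)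
    (hW : W.det ≠ 0) : (LinearMap.range W.mulVecLin).toAddSubgroup.index = W.det.natAbs := by
  let e := LinearEquiv.ofInjective _ ((mulVecLin_injective_iff_det_ne_zero W).2 hW)
  exact (Submodule.natAbs_det_equiv _ e).symm.trans (by rw [← LinearMap.det_toLin']; rfl)

section IntegerLattice

variable {m : ℕ}

theorem exists_det_ne_zero_range_mulVecLin_eq (L : Submodule ℤ (Fin m → ℤ))
    (hL : finrank ℤ L = m) :
    ∃ D : Matrix (Fin m) (Fin m) ℤ, D.det ≠ 0 ∧ LinearMap.range D.mulVecLin = L := by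
  let e := LinearEquiv.ofFinrankEq (Fin m → ℤ) L (by rw [hL, finrank_fin_fun])
  refine ⟨LinearMap.toMatrix' (L.subtype ∘ₗ e.toLinearMap), ?_, ?_⟩
  · rw [← mulVecLin_injective_iff_det_ne_zero, ← toLin'_apply', toLin'_toMatrix']
    exact L.subtype_injective.comp e.injective
  · rw [← toLin'_apply', toLin'_toMatrix', LinearMap.range_comp, e.range, Submodule.map_top,
      Submodule.range_subtype]

theorem index_range_mulVecLin_eq_gcd {ι : Type*} [Fintype ι] [DecidableEq ι]
    (A : Matrix (Fin m) ι ℤ) {g : Fin m → ι} (hg : (A.submatrix id g).det ≠ 0) :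
    (LinearMap.range A.mulVecLin).toAddSubgroup.index =
      Finset.univ.gcd fun φ : Fin m → ι => (A.submatrix id φ).det.natAbs := by
  have hfinrank : finrank ℤ (LinearMap.range A.mulVecLin) = m := by
    refine le_antisymm ((Submodule.finrank_le _).trans (finrank_fin_fun ℤ).le) ?_
    calc m = finrank ℤ (LinearMap.range (A.submatrix id g).mulVecLin) := by
          rw [LinearMap.finrank_range_of_inj ((mulVecLin_injective_iff_det_ne_zero _).2 hg),
            finrank_fin_fun]
      _ ≤ _ := Submodule.finrank_mono (range_mulVecLin_submatrix_le_s5 A g)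
  obtain ⟨D, hD, hDrange⟩ := exists_det_ne_zero_range_mulVecLin_eq _ hfinrank
  obtain ⟨X, rfl⟩ := exists_eq_mul_of_range_le hDrange.le
  refine Nat.dvd_antisymm (Finset.dvd_gcd fun φ _ => ?_) ?_
  · by_cases hφ : (A.submatrix id φ).det = 0
    · simp [hφ]
    · rw [← index_range_mulVecLin _ hφ]
      exact AddSubgroup.index_dvd_of_le (range_mulVecLin_submatrix_le_s5 A φ)
  · rw [← hDrange, index_range_mulVecLin _ hD, ← Int.natCast_dvd,
      det_mul_eq_sum_mul_det_submatrix]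
    exact Finset.dvd_sum fun φ _ => (Int.natCast_dvd.2 <|
      Finset.gcd_dvd (f := fun φ => (A.submatrix id φ).det.natAbs) (Finset.mem_univ φ)).mul_left _

theorem sum_mul_gcd_lt_abs_det_of_minimal {ι : Type*} [Fintype ι] [DecidableEq ι]
    (A : Matrix (Fin m) ι ℤ) {g : Fin m → ι} (hB : (A.submatrix id g).det ≠ 0)
    {z : ι → ℤ} (hz : 0 ≤ z)
    (hmin : ∀ w : ι → ℤ, 0 ≤ w → w ≤ z → w ≠ z →
      A *ᵥ w - A *ᵥ z ∉ LinearMap.range (A.submatrix id g).mulVecLin) :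
    (∑ j, z j) * (Finset.univ.gcd fun φ : Fin m → ι => (A.submatrix id φ).det.natAbs : ℕ) <
      |(A.submatrix id g).det| := by
  set γ := Finset.univ.gcd fun φ : Fin m → ι => (A.submatrix id φ).det.natAbs
  set ρ := (LinearMap.range (A.submatrix id g).mulVecLin).toAddSubgroup.relIndex
    (LinearMap.range A.mulVecLin).toAddSubgroup
  have hργ : ρ * γ = (A.submatrix id g).det.natAbs := by
    rw [show γ = _ from (index_range_mulVecLin_eq_gcd A hB).symm, ← index_range_mulVecLin _ hB]
    exact AddSubgroup.relIndex_mul_index (range_mulVecLin_submatrix_le_s5 A g)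
  have hρ : ρ ≠ 0 := left_ne_zero_of_mul (hργ ▸ Int.natAbs_ne_zero.2 hB)
  have hγ : 0 < γ := Nat.pos_of_ne_zero (right_ne_zero_of_mul (hργ ▸ Int.natAbs_ne_zero.2 hB))
  obtain ⟨T, hT⟩ := Int.eq_ofNat_of_zero_le (Finset.sum_nonneg fun j _ => hz j)
  obtain ⟨c, hc, hcz⟩ := exists_strictMono_chain_s5 T z hz hT
  have hTρ : T + 1 ≤ ρ := card_le_relIndex_of_minimal A.mulVecLin _ hρ hmin hc hcz
  rw [hT, ← Int.natCast_natAbs, ← hργ]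
  exact_mod_cast (Nat.mul_lt_mul_of_pos_right T.lt_succ_self hγ).trans_le
    (Nat.mul_le_mul_right γ hTρ)

end IntegerLattice

/-- Cramer's rule; it also holds for singular `B`, where `B⁻¹ = 0` and `x / 0 = 0`. -/
theorem inv_mul_apply_eq_det_updateCol_div {K m n : Type*} [Field K] [Fintype m] [DecidableEq m]
    (B : Matrix m m K) (A : Matrix m n K) (i : m) (j : n) :
    (B⁻¹ * A) i j = (B.updateCol i (A.col j)).det / B.det := by
  rw [inv_def, smul_mul, smul_apply, smul_eq_mul, Ring.inverse_eq_inv', ← cramer_apply,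
    cramer_eq_adjugate_mulVec, inv_mul_eq_div]
  rfl

theorem updateCol_submatrix_id_col {α m n ι : Type*} [DecidableEq n] (A : Matrix m ι α)
    (g : n → ι) (i : n) (j : ι) :
    (A.submatrix id g).updateCol i (A.col j) = A.submatrix id (Function.update g i j) := by
  ext p q
  by_cases h : q = i
  · subst h; simp
  · simp [h]

theorem abs_mulVec_apply_le {K m n : Type*} [Fintype n] [Field K] [LinearOrder K]
    [IsStrictOrderedRing K] (M : Matrix m n K) {s : K} (hM : ∀ i j, |M i j| ≤ s) {v : n → K}
    (hv : 0 ≤ v) (i : m) : |(M *ᵥ v) i| ≤ s * ∑ j, v j := by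
  rw [Finset.mul_sum]
  calc |(M *ᵥ v) i| ≤ ∑ j, |M i j * v j| := Finset.abs_sum_le_sum_abs _ _
    _ ≤ ∑ j, s * v j := Finset.sum_le_sum fun j _ => by
      rw [abs_mul, abs_of_nonneg (hv j)]
      exact mul_le_mul_of_nonneg_right (hM i j) (hv j)

theorem abs_det_submatrix_le_sup {K ι : Type*} [CommRing K] [LinearOrder K] [IsStrictOrderedRing K]
    [Fintype ι] {m : ℕ} (A : Matrix (Fin m) ι ℤ) (g : Fin m → ι) :
    |((A.submatrix id g).det : K)| ≤
      ((Finset.univ.sup fun φ : Fin m → ι => (A.submatrix id φ).det.natAbs : ℕ) : K) := by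
  rw [← Int.cast_abs, ← Int.natCast_natAbs]
  exact_mod_cast Finset.le_sup (f := fun φ : Fin m → ι => (A.submatrix id φ).det.natAbs)
    (Finset.mem_univ g)

theorem abs_inv_mul_apply_le {K ι : Type*} [Field K] [LinearOrder K] [IsStrictOrderedRing K]
    [Fintype ι] {m : ℕ} (A : Matrix (Fin m) ι ℤ) (g : Fin m → ι) (i : Fin m) (j : ι) :
    |(((A.submatrix id g).map (Int.cast : ℤ → K))⁻¹ * A.map (Int.cast : ℤ → K)) i j| ≤
      ((Finset.univ.sup fun φ : Fin m → ι => (A.submatrix id φ).det.natAbs : ℕ) : K) /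
        |((A.submatrix id g).det : K)| := by
  rw [inv_mul_apply_eq_det_updateCol_div, ← submatrix_map, updateCol_submatrix_id_col,
    submatrix_map, submatrix_map, ← Int.cast_det, ← Int.cast_det, abs_div]
  gcongr
  exact abs_det_submatrix_le_sup A _

end Matrix

theorem stmt5_general (m n : ℕ) [NeZero m] [NeZero n]
    (A : Matrix (Fin m) (Fin n) ℤ)
    (g : Fin m → Fin n)
    (hB : (A.submatrix id g).det ≠ 0)
    (z : Fin n → ℤ) (hz : 0 ≤ z)
    (hmin : ∀ w : Fin n → ℤ, 0 ≤ w → w ≤ z → w ≠ z →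
      A.mulVec w - A.mulVec z ∉ LinearMap.range (A.submatrix id g).mulVecLin) :
    (∀ i, |((((A.submatrix id g).map (Int.cast : ℤ → ℚ))⁻¹ *
            A.map (Int.cast : ℤ → ℚ)).mulVec (fun j => (z j : ℚ))) i| ≤
        (Finset.univ.sup' Finset.univ_nonempty (fun p : Fin m × Fin n =>
            |((((A.submatrix id g).map (Int.cast : ℤ → ℚ))⁻¹ *
                A.map (Int.cast : ℤ → ℚ)) p.1 p.2)|)) *
          ∑ j, (z j : ℚ)) ∧
    (Finset.univ.sup' Finset.univ_nonempty (fun p : Fin m × Fin n =>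
        |((((A.submatrix id g).map (Int.cast : ℤ → ℚ))⁻¹ *
            A.map (Int.cast : ℤ → ℚ)) p.1 p.2)|)) *
        ∑ j, (z j : ℚ) <
      ((Finset.univ.sup (fun g' : Fin m → Fin n =>
          (A.submatrix id g').det.natAbs) : ℕ) : ℚ) /
        ((Finset.univ.gcd (fun g' : Fin m → Fin n =>
          (A.submatrix id g').det.natAbs) : ℕ) : ℚ) := by
  set M := ((A.submatrix id g).map (Int.cast : ℤ → ℚ))⁻¹ * A.map (Int.cast : ℤ → ℚ)
  set s := Finset.univ.sup' Finset.univ_nonempty fun p : Fin m × Fin n => |M p.1 p.2|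
  set δ := Finset.univ.sup fun φ : Fin m → Fin n => (A.submatrix id φ).det.natAbs
  set γ := Finset.univ.gcd fun φ : Fin m → Fin n => (A.submatrix id φ).det.natAbs
  have hzq : 0 ≤ fun j => (z j : ℚ) := fun j => Int.cast_nonneg (hz j)
  have hMs : ∀ i j, |M i j| ≤ s := fun i j =>
    Finset.le_sup' (fun p : Fin m × Fin n => |M p.1 p.2|) (Finset.mem_univ (i, j))
  have hsδ : s ≤ δ / |((A.submatrix id g).det : ℚ)| :=
    Finset.sup'_le _ _ fun p _ => Matrix.abs_inv_mul_apply_le A g p.1 p.2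
  have hlt : (∑ j, (z j : ℚ)) * γ < |((A.submatrix id g).det : ℚ)| := by
    exact_mod_cast Matrix.sum_mul_gcd_lt_abs_det_of_minimal A hB hz hmin
  have hdetδ : |((A.submatrix id g).det : ℚ)| ≤ δ := Matrix.abs_det_submatrix_le_sup A g
  have hdet : 0 < |((A.submatrix id g).det : ℚ)| := abs_pos.2 (Int.cast_ne_zero.2 hB)
  have hγ : (0 : ℚ) < γ := Nat.cast_pos.2 <| Nat.pos_of_ne_zero fun h =>
    hB <| Int.natAbs_eq_zero.1 <| Finset.gcd_eq_zero_iff.1 h g (Finset.mem_univ g)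
  refine ⟨Matrix.abs_mulVec_apply_le M hMs hzq, ?_⟩
  calc s * ∑ j, (z j : ℚ) ≤ δ / |((A.submatrix id g).det : ℚ)| * ∑ j, (z j : ℚ) :=
        mul_le_mul_of_nonneg_right hsδ (Finset.sum_nonneg fun j _ => hzq j)
    _ < δ / γ := by
      rw [div_mul_eq_mul_div, div_lt_div_iff₀ hdet hγ, mul_assoc]
      exact mul_lt_mul_of_pos_left hlt (hdet.trans_le hdetδ)

/-- If `z ∈ ℤⁿ_{≥0}` has no `w` with `0 ≤ w ⪇ z` and `A w ≡ A z (mod Γ)`,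
where `Γ = B·ℤᵐ` for an invertible submatrix `B = A_g`, then
`‖B⁻¹ A z‖_∞ ≤ ‖B⁻¹A‖_∞ · ‖z‖₁ < γ⁻¹·δ`. -/
theorem stmt5 (m n : ℕ) [NeZero m] [NeZero n]
    (A : Matrix (Fin m) (Fin n) ℤ) (hA : A.rank = m)
    (g : Fin m → Fin n) (hg : Function.Injective g)
    (hB : (A.submatrix id g).det ≠ 0)
    (z : Fin n → ℤ) (hz : 0 ≤ z)
    (hmin : ∀ w : Fin n → ℤ, 0 ≤ w → w ≤ z → w ≠ z →
      A.mulVec w - A.mulVec z ∉ LinearMap.range (A.submatrix id g).mulVecLin) :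
    (∀ i, |((((A.submatrix id g).map (Int.cast : ℤ → ℚ))⁻¹ *
            A.map (Int.cast : ℤ → ℚ)).mulVec (fun j => (z j : ℚ))) i| ≤
        (Finset.univ.sup' Finset.univ_nonempty (fun p : Fin m × Fin n =>
            |((((A.submatrix id g).map (Int.cast : ℤ → ℚ))⁻¹ *
                A.map (Int.cast : ℤ → ℚ)) p.1 p.2)|)) *
          ∑ j, (z j : ℚ)) ∧
    (Finset.univ.sup' Finset.univ_nonempty (fun p : Fin m × Fin n =>
        |((((A.submatrix id g).map (Int.cast : ℤ → ℚ))⁻¹ *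
            A.map (Int.cast : ℤ → ℚ)) p.1 p.2)|)) *
        ∑ j, (z j : ℚ) <
      ((Finset.univ.sup (fun g' : Fin m → Fin n =>
          (A.submatrix id g').det.natAbs) : ℕ) : ℚ) /
        ((Finset.univ.gcd (fun g' : Fin m → Fin n =>
          (A.submatrix id g').det.natAbs) : ℕ) : ℚ) :=
  stmt5_general m n A g hB z hz hmin
end
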